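/- Let U ⊆ ℂ^m be an isotropic ℝ-linear subspace (⟨v, A₀v⟩_ℂ = 0 for all v ∈ U) which is either a complex subspace (JU ⊆ U) or a totally real subspace (⟨u, Jv⟩ = 0 for all u,v ∈ U). Then U is curvature-invariant, and for all u,v,w ∈ U the curvature tensor restricts to R(u,v)w = ⟨w,v⟩_ℂ·u − ⟨w,u⟩_ℂ·v − 2⟨Ju,v⟩·Jw (the curvature tensor of a complex projective space of constant holomorphic sectional curvature 4). -/

import Mathlib

noncomputable section

open Complex Module

/-- `ℂ^m` with its Hermitian inner product. -/
abbrev Vc (m : ℕ) : Type := EuclideanSpace ℂ (Fin m)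

namespace Quadric

variable {m : ℕ}

/-- The complex structure `J v = i·v`. -/
def J (v : Vc m) : Vc m := (Complex.I : ℂ) • v

/-- `J` as an `ℝ`-linear map. -/
def Jlin (m : ℕ) : Vc m →ₗ[ℝ] Vc m :=
  LinearMap.restrictScalars ℝ ((Complex.I : ℂ) • (LinearMap.id : Vc m →ₗ[ℂ] Vc m))

/-- Componentwise complex conjugation (the standard conjugation `A₀`). -/
def conjA (v : Vc m) : Vc m := WithLp.toLp 2 (fun k => (starRingEnd ℂ) (v k))

/-- The Hermitian inner product, complex-linear in the FIRST argument. -/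
def hinner (v w : Vc m) : ℂ := @inner ℂ _ _ w v

/-- The real inner product `⟨v,w⟩ = Re ⟨v,w⟩_ℂ`. -/
def rinner (v w : Vc m) : ℝ := (hinner v w).re

/-- The curvature tensor of the complex quadric `Q^m`. -/
def Rcurv (u v w : Vc m) : Vc m :=
  hinner w v • u - hinner w u • v - ((2 : ℝ) * rinner (J u) v) • J w
    + hinner v (conjA w) • conjA u - hinner u (conjA w) • conjA v

/-- Curvature invariance: the Lie triple systems of `Q^m`. -/
def CurvInv (U : Submodule ℝ (Vc m)) : Prop :=
  ∀ u ∈ U, ∀ v ∈ U, ∀ w ∈ U, Rcurv u v w ∈ U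


lemma conjA_add (u v : Vc m) : conjA (u + v) = conjA u + conjA v := by
  ext k
  simp [conjA]

lemma hinner_conjA_symm (u v : Vc m) : hinner u (conjA v) = hinner v (conjA u) := by
  simp only [hinner, conjA, PiLp.inner_apply]
  refine Finset.sum_congr rfl fun k _ => ?_
  simp [RCLike.inner_apply]
  ring

lemma hinner_add_left (u v w : Vc m) :
    hinner (u + v) w = hinner u w + hinner v w := by
  simp [hinner, inner_add_right]

lemma hinner_add_right (u v w : Vc m) :
    hinner u (v + w) = hinner u v + hinner u w := by
  simp [hinner, inner_add_left]

lemma conj_bilinear_zero (U : Submodule ℝ (Vc m))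
    (hiso : ∀ v ∈ U, hinner v (conjA v) = 0)
    {u v : Vc m} (hu : u ∈ U) (hv : v ∈ U) : hinner u (conjA v) = 0 := by
  have h := hiso (u + v) (U.add_mem hu hv)
  rw [conjA_add, hinner_add_left, hinner_add_right, hinner_add_right,
    hiso u hu, hiso v hv, hinner_conjA_symm v u] at h
  have : (2 : ℂ) * hinner u (conjA v) = 0 := by ring_nf; linear_combination h
  simpa using this

lemma rinner_J_left (u v : Vc m) : rinner (J u) v = -(hinner u v).im := by
  simp [rinner, hinner, J, inner_smul_left, Complex.mul_re, neg_add,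
    Finset.sum_add_distrib, Finset.sum_neg_distrib]

lemma rinner_J_right (u v : Vc m) : rinner u (J v) = (hinner u v).im := by
  simp [rinner, hinner, J, inner_smul_right, Complex.mul_re, neg_add, sub_eq_add_neg,
    Finset.sum_add_distrib, Finset.sum_neg_distrib]

lemma csmul_decomp (c : ℂ) (u : Vc m) : c • u = c.re • u + c.im • J u := by
  rw [J, smul_comm, ← Complex.coe_smul, ← Complex.coe_smul, smul_smul, ← add_smul]
  rw [mul_comm, ← Complex.re_add_im c]
  norm_num

/-- An isotropic real subspace of `ℂ^m` which is complex or totally real is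
curvature-invariant, and on it the curvature tensor of `Q^m` restricts to the curvature
tensor of a complex projective space of constant holomorphic sectional curvature 4. -/
theorem curvInv_of_isotropic (hm : 2 ≤ m) (U : Submodule ℝ (Vc m))
    (hiso : ∀ v ∈ U, hinner v (conjA v) = 0)
    (hct : (∀ u ∈ U, J u ∈ U) ∨ (∀ u ∈ U, ∀ v ∈ U, rinner u (J v) = 0)) :
    CurvInv U ∧
      ∀ u ∈ U, ∀ v ∈ U, ∀ w ∈ U,
        Rcurv u v w = hinner w v • u - hinner w u • v - ((2 : ℝ) * rinner (J u) v) • J w := by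
  have hres : ∀ u ∈ U, ∀ v ∈ U, ∀ w ∈ U,
      Rcurv u v w = hinner w v • u - hinner w u • v - ((2 : ℝ) * rinner (J u) v) • J w := by
    intro u hu v hv w hw
    rw [Rcurv, conj_bilinear_zero U hiso hv hw, conj_bilinear_zero U hiso hu hw]
    simp
  refine ⟨?_, hres⟩
  intro u hu v hv w hw
  rw [hres u hu v hv w hw]
  rcases hct with hJ | htr
  · -- complex case
    have mem_of_csmul : ∀ c : ℂ, ∀ x ∈ U, c • x ∈ U := by
      intro c x hx
      rw [csmul_decomp]
      exact U.add_mem (U.smul_mem _ hx) (U.smul_mem _ (hJ x hx))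
    exact U.sub_mem (U.sub_mem (mem_of_csmul _ u hu) (mem_of_csmul _ v hv))
      (U.smul_mem _ (hJ w hw))
  · -- totally real case
    have him : ∀ x ∈ U, ∀ y ∈ U, (hinner x y).im = 0 := by
      intro x hx y hy
      rw [← rinner_J_right]
      exact htr x hx y hy
    have hreal : ∀ x ∈ U, ∀ y ∈ U, ∀ z ∈ U, hinner x y • z ∈ U := by
      intro x hx y hy z hz
      rw [csmul_decomp, him x hx y hy]
      simpa using U.smul_mem (hinner x y).re hz
    have hJu : rinner (J u) v = 0 := by
      rw [rinner_J_left, him u hu v hv, neg_zero]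
    rw [hJu]
    simpa using U.sub_mem (hreal w hw v hv u hu) (hreal w hw u hu v hv)

end Quadric
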